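/- arXiv:1604.01965 — 2 statements merged into one kernel-verified Lean document; each statement's English description precedes it below -/
import Mathlib

section
/- Let N be a topological space, U₁, ..., U_k an open cover of N, ρ₁, ..., ρ_k a partition of unity subordinate to this cover, and f₁, ..., f_k : N → ℝ continuous functions such that each f_i is proper and bounded below on the closure of U_i. Then the function f = Σᵢ ρᵢ fᵢ is proper and bounded below on N. -/
/-- Patching proper, bounded-below functions with a partition of unity yields a
proper, bounded-below function. -/
theorem stmt_1 {N : Type*} [TopologicalSpace N] {k : ℕ}
    (U : Fin k → Set N) (hUopen : ∀ i, IsOpen (U i)) (hcover : (⋃ i, U i) = Set.univ)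
    (ρ : Fin k → N → ℝ) (hρc : ∀ i, Continuous (ρ i)) (hρ0 : ∀ i x, 0 ≤ ρ i x)
    (hsupp : ∀ i, tsupport (ρ i) ⊆ U i) (hsum : ∀ x, ∑ i, ρ i x = 1)
    (f : Fin k → N → ℝ) (hfc : ∀ i, Continuous (f i))
    (hproper : ∀ i, ∀ K : Set ℝ, IsCompact K → IsCompact ((f i) ⁻¹' K ∩ closure (U i)))
    (hbdd : ∀ i, ∃ c : ℝ, ∀ x ∈ closure (U i), c ≤ f i x) :
    (∀ K : Set ℝ, IsCompact K → IsCompact ((fun x => ∑ i, ρ i x * f i x) ⁻¹' K)) ∧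
      (∃ c : ℝ, ∀ x, c ≤ ∑ i, ρ i x * f i x) := by
  classical
  set g : N → ℝ := fun x => ∑ i, ρ i x * f i x with hgdef
  have hgc : Continuous g := by
    apply continuous_finset_sum
    intro i _
    exact (hρc i).mul (hfc i)
  choose c hc using hbdd
  set m : Fin k → ℝ := fun i => min (c i) 0 with hmdef
  have hρ1 : ∀ i x, ρ i x ≤ 1 := by
    intro i x
    calc ρ i x ≤ ∑ j, ρ j x :=
          Finset.single_le_sum (fun j _ => hρ0 j x) (Finset.mem_univ i)
      _ = 1 := hsum x
  have hA : ∀ i x, m i ≤ ρ i x * f i x := by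
    intro i x
    by_cases hx : x ∈ closure (U i)
    · have h1 := hc i x hx
      have h2 := hρ0 i x
      have h3 := hρ1 i x
      have h4 : m i ≤ c i := min_le_left _ _
      have h5 : m i ≤ 0 := min_le_right _ _
      nlinarith [mul_nonneg h2 (sub_nonneg.2 h1), mul_nonneg h2 (sub_nonneg.2 h4),
        mul_nonneg (neg_nonneg.2 h5) (sub_nonneg.2 h3)]
    · have hz : ρ i x = 0 := by
        by_contra h
        exact hx (subset_closure (hsupp i (subset_tsupport _ h)))
      rw [hz, zero_mul]
      exact min_le_right _ _
  constructor
  · intro K hK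
    obtain ⟨b, hb⟩ := hK.bddAbove
    set C : ℝ := ∑ j, m j with hCdef
    set B : ℝ := (k : ℝ) * max (b - C) 0 with hBdef
    have hTc : IsCompact (⋃ i, (f i ⁻¹' (Set.Icc (c i) B) ∩ closure (U i))) := by
      apply isCompact_iUnion
      intro i
      exact hproper i _ isCompact_Icc
    apply IsCompact.of_isClosed_subset hTc (hK.isClosed.preimage hgc)
    intro x hx
    have hgK : g x ≤ b := hb hx
    have hk : 0 < k := by
      rcases Nat.eq_zero_or_pos k with h | h
      · exfalso
        have := hsum x
        subst h
        simp at this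
      · exact h
    have hk' : (0 : ℝ) < k := by exact_mod_cast hk
    have hex : ∃ i, (1 : ℝ) / k ≤ ρ i x := by
      by_contra h
      push_neg at h
      have : Nonempty (Fin k) := Fin.pos_iff_nonempty.mp hk
      have hne : (Finset.univ : Finset (Fin k)).Nonempty := Finset.univ_nonempty
      have hlt : ∑ i, ρ i x < ∑ _i : Fin k, (1 : ℝ) / k :=
        Finset.sum_lt_sum_of_nonempty hne (fun i _ => h i)
      rw [hsum x, Finset.sum_const, Finset.card_univ, Fintype.card_fin,
        nsmul_eq_mul] at hlt
      rw [mul_div_cancel₀ 1 (ne_of_gt hk')] at hlt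
      exact lt_irrefl 1 hlt
    obtain ⟨i, hi⟩ := hex
    have hρpos : 0 < ρ i x := lt_of_lt_of_le (by positivity) hi
    have hxcl : x ∈ closure (U i) :=
      subset_closure (hsupp i (subset_tsupport _ (ne_of_gt hρpos)))
    have hsplit : ρ i x * f i x + ∑ j ∈ Finset.univ.erase i, ρ j x * f j x = g x :=
      Finset.add_sum_erase Finset.univ (fun j => ρ j x * f j x) (Finset.mem_univ i)
    have hCm : ∑ j ∈ Finset.univ.erase i, m j = C - m i :=
      Finset.sum_erase_eq_sub (Finset.mem_univ i)
    have hrest : C - m i ≤ ∑ j ∈ Finset.univ.erase i, ρ j x * f j x := by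
      rw [← hCm]
      exact Finset.sum_le_sum (fun j _ => hA j x)
    have hmi : m i ≤ 0 := min_le_right _ _
    have h1 : ρ i x * f i x ≤ b - C := by linarith
    have hfB : f i x ≤ B := by
      rcases le_or_gt (f i x) 0 with h | h
      · have : (0 : ℝ) ≤ B := by
          rw [hBdef]; positivity
        linarith
      · have hki : (1 : ℝ) ≤ (k : ℝ) * ρ i x := by
          rw [div_le_iff₀ hk'] at hi
          linarith
        have a1 : f i x ≤ (k : ℝ) * (ρ i x * f i x) := by
          nlinarith [mul_nonneg (sub_nonneg.2 hki) h.le]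
        have a2 : (k : ℝ) * (ρ i x * f i x) ≤ (k : ℝ) * (b - C) :=
          mul_le_mul_of_nonneg_left h1 hk'.le
        have a3 : (k : ℝ) * (b - C) ≤ B := by
          rw [hBdef]
          exact mul_le_mul_of_nonneg_left (le_max_left _ _) hk'.le
        linarith
    exact Set.mem_iUnion.2 ⟨i, ⟨⟨hc i x hxcl, hfB⟩, hxcl⟩⟩
  · exact ⟨∑ i, m i, fun x => Finset.sum_le_sum (fun i _ => hA i x)⟩
end

section
/- Let V = ℂ^r with a torus H = (S¹)^d acting by a single weight α ∈ ℤ^d (i.e., t·z = t^α z), and let β̄ ∈ ℝ^d satisfy ⟨α, β̄⟩ < 0. Then for every s > 0 and X ∈ ℝ^d, the number Eul(V, 2πi(X − isβ̄)) := (−2πi⟨α, X − isβ̄⟩)^r is nonzero, and its reciprocal converges as s → 0⁺, as a tempered distribution in X, to a distribution whose inverse Fourier transform is the r-fold convolution power H_{−α}^{⋆r} of the Heaviside distribution supported on the ray ℝ_{≥0}(−α). -/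
open Filter

open MeasureTheory Set Complex

variable {d r : ℕ}

lemma aux_measurableSet_S (r : ℕ) : MeasurableSet {t : Fin r → ℝ | ∀ j, 0 < t j} := by
  have : {t : Fin r → ℝ | ∀ j, 0 < t j} = ⋂ j, (fun t : Fin r → ℝ => t j) ⁻¹' Ioi 0 := by
    ext t; simp
  rw [this]
  exact MeasurableSet.iInter fun j => (measurable_pi_apply j) measurableSet_Ioi

lemma aux_phi_continuous (v : EuclideanSpace ℝ (Fin d)) :
    Continuous (fun t : Fin r → ℝ => (∑ j, t j) • v) :=
  (continuous_finset_sum Finset.univ (fun j _ => continuous_apply j)).smul continuous_const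

lemma aux_pointwise (v : EuclideanSpace ℝ (Fin d)) (hv : v ≠ 0) (t : Fin r → ℝ)
    (ht : ∀ j, 0 < t j) :
    (1 + ‖(∑ j, t j) • v‖) ^ (-((2*r : ℕ) : ℝ)) ≤
      ∏ j, (min ‖v‖ 1)⁻¹ ^ 2 * (1 + ‖t j‖) ^ (-(2:ℝ)) := by
  set m := min ‖v‖ 1 with hm
  have hm0 : 0 < m := lt_min (norm_pos_iff.mpr hv) one_pos
  have hm1 : m ≤ 1 := min_le_right _ _
  have hmv : m ≤ ‖v‖ := min_le_left _ _
  set T := ∑ j, t j with hT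
  have hT0 : 0 ≤ T := Finset.sum_nonneg fun j _ => (ht j).le
  have htj : ∀ j, t j ≤ T := fun j =>
    Finset.single_le_sum (fun i _ => (ht i).le) (Finset.mem_univ j)
  have hnorm : ‖T • v‖ = T * ‖v‖ := by
    rw [norm_smul, Real.norm_eq_abs, _root_.abs_of_nonneg hT0]
  have step1 : ∏ j, (m * (1 + t j)) ≤ (1 + T * ‖v‖) ^ r := by
    calc ∏ j, (m * (1 + t j)) ≤ ∏ _j : Fin r, (1 + T * ‖v‖) := by
          apply Finset.prod_le_prod
          · intro j _
            exact mul_nonneg hm0.le (by linarith [(ht j).le])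
          · intro j _
            have h1 : m * (1 + t j) = m + m * t j := by ring
            have h2 : m * t j ≤ ‖v‖ * T :=
              mul_le_mul hmv ((htj j).trans le_rfl) (ht j).le (norm_nonneg v)
            nlinarith [htj j, (ht j).le]
      _ = (1 + T * ‖v‖) ^ r := by rw [Finset.prod_const, Finset.card_univ, Fintype.card_fin]
  have hQ : 0 < ∏ j, (m * (1 + t j)) := Finset.prod_pos fun j _ => mul_pos hm0 (by linarith [ht j])
  have key : ((1 + T * ‖v‖) ^ (2*r))⁻¹ ≤ ((∏ j, (m * (1 + t j))) ^ 2)⁻¹ := by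
    apply inv_anti₀ (by positivity)
    calc (∏ j, (m * (1 + t j))) ^ 2 ≤ ((1 + T * ‖v‖) ^ r) ^ 2 := by
          apply pow_le_pow_left₀ hQ.le step1
      _ = (1 + T * ‖v‖) ^ (2*r) := by rw [← pow_mul]; ring_nf
  have lhs_eq : (1 + ‖T • v‖) ^ (-((2*r : ℕ) : ℝ)) = ((1 + T * ‖v‖) ^ (2*r))⁻¹ := by
    rw [hnorm, Real.rpow_neg (by positivity), Real.rpow_natCast]
  have rhs_eq : (∏ j, (m⁻¹ ^ 2 * (1 + ‖t j‖) ^ (-(2:ℝ)))) = ((∏ j, (m * (1 + t j))) ^ 2)⁻¹ := by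
    rw [← Finset.prod_pow]
    rw [← Finset.prod_inv_distrib]
    apply Finset.prod_congr rfl
    intro j _
    rw [Real.norm_eq_abs, _root_.abs_of_nonneg (ht j).le]
    rw [show (-(2:ℝ)) = -((2:ℕ):ℝ) by norm_num, Real.rpow_neg (by linarith [ht j]), Real.rpow_natCast]
    rw [mul_pow, mul_inv]
    ring_nf
  rw [lhs_eq, rhs_eq]
  exact key

lemma aux_w_integrable (c : ℝ) :
    Integrable (Set.indicator (Ioi (0:ℝ)) (fun u : ℝ => c * (1 + ‖u‖) ^ (-(2:ℝ)))) := by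
  refine Integrable.indicator ?_ measurableSet_Ioi
  exact (integrable_one_add_norm (by simp)).const_mul c

lemma aux_temperate (v : EuclideanSpace ℝ (Fin d)) (hv : v ≠ 0) :
    (Measure.map (fun t : Fin r → ℝ => (∑ j, t j) • v)
      ((volume : Measure (Fin r → ℝ)).restrict {t | ∀ j, 0 < t j})).HasTemperateGrowth := by
  refine ⟨⟨2*r, ?_⟩⟩
  have hφ : Measurable (fun t : Fin r → ℝ => (∑ j, t j) • v) :=
    (aux_phi_continuous v).measurable
  have hcont : Continuous (fun x : EuclideanSpace ℝ (Fin d) => (1 + ‖x‖) ^ (-((2*r : ℕ) : ℝ))) :=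
    (continuous_const.add continuous_norm).rpow_const (fun x => Or.inl (show (1:ℝ) + ‖x‖ ≠ 0 by positivity))
  rw [integrable_map_measure hcont.aestronglyMeasurable hφ.aemeasurable]
  set w := Set.indicator (Ioi (0:ℝ)) (fun u : ℝ => (min ‖v‖ 1)⁻¹ ^ 2 * (1 + ‖u‖) ^ (-(2:ℝ))) with hw
  refine Integrable.mono' (g := fun t : Fin r → ℝ => ∏ j, w (t j)) ?_ ?_ ?_
  · exact (Integrable.fintype_prod (f := fun _ : Fin r => w) (fun _ => aux_w_integrable _)).restrict
  · exact ((hcont.comp (aux_phi_continuous v)).aestronglyMeasurable).restrict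
  · rw [ae_restrict_iff' (aux_measurableSet_S r)]
    filter_upwards with t ht
    have h1 : ‖(1 + ‖(∑ j, t j) • v‖) ^ (-((2*r : ℕ) : ℝ))‖
        = (1 + ‖(∑ j, t j) • v‖) ^ (-((2*r : ℕ) : ℝ)) := by
      rw [Real.norm_eq_abs, _root_.abs_of_nonneg (Real.rpow_nonneg (by positivity) _)]
    rw [Function.comp_apply, h1]
    have h2 : ∀ j : Fin r, w (t j) = (min ‖v‖ 1)⁻¹ ^ 2 * (1 + ‖t j‖) ^ (-(2:ℝ)) :=
      fun j => Set.indicator_of_mem (ht j) _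
    simp_rw [h2]
    exact aux_pointwise v hv t ht


lemma aux_exp_integrableOn {a : ℂ} (ha : a.re < 0) :
    IntegrableOn (fun u : ℝ => Complex.exp (a * u)) (Ioi 0) := by
  have h1 : IntegrableOn (fun u : ℝ => Real.exp (-(-a.re) * u)) (Ioi 0) :=
    exp_neg_integrableOn_Ioi 0 (by linarith)
  refine Integrable.mono' h1 ?_ ?_
  · exact (Complex.continuous_exp.comp (continuous_const.mul Complex.continuous_ofReal)).aestronglyMeasurable
  · filter_upwards with u
    rw [Complex.norm_exp]
    simp [Complex.mul_re]

lemma aux_exp_integral {a : ℂ} (ha : a.re < 0) :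
    ∫ u in Ioi (0:ℝ), Complex.exp (a * u) = -a⁻¹ := by
  have hane : a ≠ 0 := fun h => by simp [h] at ha
  have hderiv : ∀ x ∈ Ici (0:ℝ), HasDerivAt (fun u : ℝ => Complex.exp (a * u) / a) (Complex.exp (a * x)) x := by
    intro x _
    have h1 : HasDerivAt (fun w : ℂ => Complex.exp (a * w) / a) (Complex.exp (a * x)) (x : ℂ) := by
      have h2 : HasDerivAt (fun w : ℂ => a * w) a (x:ℂ) := by
        simpa using (hasDerivAt_id (x:ℂ)).const_mul a
      simpa [mul_div_assoc, mul_div_cancel_right₀ _ hane] using (h2.cexp).div_const a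
    exact h1.comp_ofReal
  have htend : Filter.Tendsto (fun x : ℝ => Complex.exp (a * x) / a) Filter.atTop (nhds 0) := by
    rw [tendsto_zero_iff_norm_tendsto_zero]
    have heq : (fun x : ℝ => ‖Complex.exp (a * x) / a‖) = fun x => Real.exp (a.re * x) / ‖a‖ := by
      ext x
      rw [norm_div, Complex.norm_exp]
      simp [Complex.mul_re]
    rw [heq]
    have h3 : Filter.Tendsto (fun x : ℝ => Real.exp (a.re * x)) Filter.atTop (nhds 0) :=
      Real.tendsto_exp_atBot.comp (Filter.Tendsto.const_mul_atTop_of_neg ha Filter.tendsto_id)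
    simpa using h3.div_const ‖a‖
  have h := integral_Ioi_of_hasDerivAt_of_tendsto' hderiv (aux_exp_integrableOn ha) htend
  rw [h]
  rw [Complex.ofReal_zero, mul_zero, Complex.exp_zero, zero_sub, one_div]

lemma aux_prodK (a : ℂ) (t : Fin r → ℝ) :
    (∏ j, Set.indicator (Ioi (0:ℝ)) (fun u : ℝ => Complex.exp (a * u)) (t j)) =
      Set.indicator {t : Fin r → ℝ | ∀ j, 0 < t j}
        (fun t => Complex.exp (a * (∑ j, t j))) t := by
  by_cases ht : ∀ j, 0 < t j
  · rw [Set.indicator_of_mem (show t ∈ {t : Fin r → ℝ | ∀ j, 0 < t j} from ht)]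
    have : ∀ j : Fin r, Set.indicator (Ioi (0:ℝ)) (fun u : ℝ => Complex.exp (a * u)) (t j)
        = Complex.exp (a * t j) := fun j => Set.indicator_of_mem (ht j) _
    simp_rw [this, ← Complex.exp_sum, ← Finset.mul_sum, Complex.ofReal_sum]
  · rw [Set.indicator_of_notMem (show t ∉ {t : Fin r → ℝ | ∀ j, 0 < t j} from ht)]
    push_neg at ht
    obtain ⟨j, hj⟩ := ht
    exact Finset.prod_eq_zero (Finset.mem_univ j) (Set.indicator_of_notMem (by simpa using hj) _)

lemma aux_pow_integral {a : ℂ} (ha : a.re < 0) (r : ℕ) :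
    (∫ t : Fin r → ℝ, Set.indicator {t : Fin r → ℝ | ∀ j, 0 < t j}
        (fun t => Complex.exp (a * (∑ j, t j))) t) = ((-a)⁻¹) ^ r := by
  have h1 : (∫ t : Fin r → ℝ, ∏ j, Set.indicator (Ioi (0:ℝ))
      (fun u : ℝ => Complex.exp (a * u)) (t j))
      = (∫ u : ℝ, Set.indicator (Ioi (0:ℝ)) (fun u : ℝ => Complex.exp (a * u)) u) ^ r := by
    rw [MeasureTheory.volume_pi, MeasureTheory.integral_fintype_prod_eq_pow (ι := Fin r)
      (Set.indicator (Ioi (0:ℝ)) (fun u : ℝ => Complex.exp (a * u))), Fintype.card_fin]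
  simp_rw [aux_prodK a] at h1
  rw [h1, MeasureTheory.integral_indicator measurableSet_Ioi, aux_exp_integral ha, inv_neg]

lemma aux_prodK_real {r : ℕ} (b : ℝ) (t : Fin r → ℝ) :
    (∏ j, Set.indicator (Ioi (0:ℝ)) (fun u : ℝ => Real.exp (b * u)) (t j)) =
      Set.indicator {t : Fin r → ℝ | ∀ j, 0 < t j}
        (fun t => Real.exp (b * (∑ j, t j))) t := by
  by_cases ht : ∀ j, 0 < t j
  · rw [Set.indicator_of_mem (show t ∈ {t : Fin r → ℝ | ∀ j, 0 < t j} from ht)]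
    have : ∀ j : Fin r, Set.indicator (Ioi (0:ℝ)) (fun u : ℝ => Real.exp (b * u)) (t j)
        = Real.exp (b * t j) := fun j => Set.indicator_of_mem (ht j) _
    simp_rw [this, ← Real.exp_sum, ← Finset.mul_sum]
  · rw [Set.indicator_of_notMem (show t ∉ {t : Fin r → ℝ | ∀ j, 0 < t j} from ht)]
    push_neg at ht
    obtain ⟨j, hj⟩ := ht
    exact Finset.prod_eq_zero (Finset.mem_univ j) (Set.indicator_of_notMem (by simpa using hj) _)

lemma aux_wexp_integrable {b : ℝ} (hb : b < 0) :
    Integrable (Set.indicator (Ioi (0:ℝ)) (fun u : ℝ => Real.exp (b * u))) := by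
  rw [integrable_indicator_iff measurableSet_Ioi]
  have := exp_neg_integrableOn_Ioi 0 (show (0:ℝ) < -b by linarith)
  simpa using this


set_option maxHeartbeats 1000000 in
/-- For a weight `α ∈ ℤᵈ` with `⟨α,β̄⟩ < 0`: the equivariant Euler class
`Eul(V, 2πi(X - isβ̄)) = (-2πi⟨α, X - isβ̄⟩)^r` is nonzero for `s > 0`, its reciprocal
converges as `s → 0⁺` to a tempered distribution `T`, and the inverse Fourier transform of
`T` is the `r`-fold convolution power of the Heaviside distribution on the ray `ℝ₊(-α)`,
i.e. `T(ℱ⁻¹f) = ∫_{(0,∞)^r} f(∑ⱼ tⱼ·(-α)) dt` for all Schwartz `f`. -/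
theorem stmt_18 {d r : ℕ} (hr : 0 < r) (α : Fin d → ℤ)
    (β : EuclideanSpace ℝ (Fin d))
    (hpol : (∑ j, (α j : ℝ) * β j) < 0) :
    (∀ s : ℝ, 0 < s → ∀ X : EuclideanSpace ℝ (Fin d),
      ((-(2 * (Real.pi : ℂ)) * Complex.I) *
        (((∑ j, (α j : ℝ) * X j : ℝ) : ℂ) -
          Complex.I * (s : ℂ) * ((∑ j, (α j : ℝ) * β j : ℝ) : ℂ))) ^ r ≠ 0) ∧
    ∃ T : SchwartzMap (EuclideanSpace ℝ (Fin d)) ℂ →L[ℂ] ℂ,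
      (∀ f : SchwartzMap (EuclideanSpace ℝ (Fin d)) ℂ,
        Tendsto (fun s : ℝ => ∫ X : EuclideanSpace ℝ (Fin d),
          f X * (((-(2 * (Real.pi : ℂ)) * Complex.I) *
            (((∑ j, (α j : ℝ) * X j : ℝ) : ℂ) -
              Complex.I * (s : ℂ) * ((∑ j, (α j : ℝ) * β j : ℝ) : ℂ))) ^ r)⁻¹)
          (nhdsWithin 0 (Set.Ioi 0)) (nhds (T f))) ∧
      (∀ f : SchwartzMap (EuclideanSpace ℝ (Fin d)) ℂ,
        T ((FourierTransform.fourierCLE ℂ (SchwartzMap (EuclideanSpace ℝ (Fin d)) ℂ)).symm f) =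
          ∫ t : Fin r → ℝ in {t | ∀ j, 0 < t j},
            f (∑ j, t j • (EuclideanSpace.equiv (Fin d) ℝ).symm
              (fun i => -(α i : ℝ)))) := by
  classical
  set c : ℝ := ∑ j, (α j : ℝ) * β j with hcdef
  have hc : c < 0 := hpol
  set v : EuclideanSpace ℝ (Fin d) := (EuclideanSpace.equiv (Fin d) ℝ).symm (fun i => -(α i : ℝ)) with hvdef
  have hvj : ∀ j, v j = -(α j : ℝ) := fun j => rfl
  have hvne : v ≠ 0 := by
    intro h
    obtain ⟨j, hj⟩ : ∃ j, (α j : ℝ) ≠ 0 := by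
      by_contra hno
      push_neg at hno
      rw [hcdef] at hc
      simp only [hno, zero_mul, Finset.sum_const_zero] at hc
      exact lt_irrefl 0 hc
    have : v j = 0 := by rw [h]; rfl
    rw [hvj j] at this
    exact hj (by linarith [neg_eq_zero.mp this])
  set L : EuclideanSpace ℝ (Fin d) → ℝ := fun X => ∑ j, (α j : ℝ) * X j with hLdef
  have hLcont : Continuous L := by
    apply continuous_finset_sum
    intro j _
    exact continuous_const.mul (EuclideanSpace.proj (𝕜 := ℝ) j).continuous
  have hinner : ∀ X : EuclideanSpace ℝ (Fin d), (inner ℝ X v : ℝ) = -(L X) := by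
    intro X
    rw [hLdef]
    simp only [PiLp.inner_apply, RCLike.inner_apply, conj_trivial]
    rw [← Finset.sum_neg_distrib]
    apply Finset.sum_congr rfl
    intro j _
    rw [hvj j]; ring
  set S : Set (Fin r → ℝ) := {t | ∀ j, 0 < t j} with hSdef
  have hS : MeasurableSet S := aux_measurableSet_S r
  set φ : (Fin r → ℝ) → EuclideanSpace ℝ (Fin d) := fun t => (∑ j, t j) • v with hφdef
  have hφcont : Continuous φ := aux_phi_continuous v
  set μ : Measure (EuclideanSpace ℝ (Fin d)) := Measure.map φ ((volume : Measure (Fin r → ℝ)).restrict S) with hμdef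
  haveI hμtemp : μ.HasTemperateGrowth := aux_temperate v hvne
  constructor
  · -- nonzero
    intro s hs X
    apply pow_ne_zero
    intro h
    have hre := congrArg Complex.re h
    simp only [Complex.zero_re, Complex.mul_re, Complex.mul_im, Complex.sub_re, Complex.sub_im,
      Complex.I_re, Complex.I_im, Complex.ofReal_re, Complex.ofReal_im, Complex.neg_re,
      Complex.neg_im, Complex.re_ofNat, Complex.im_ofNat] at hre
    ring_nf at hre
    have hπ := Real.pi_pos
    nlinarith [hre, mul_pos hs (neg_pos.mpr hc)]
  · refine ⟨(SchwartzMap.integralCLM ℂ μ).comp (SchwartzMap.fourierTransformCLM ℂ), ?_, ?_⟩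
    · -- the convergence
      intro f
      set g := SchwartzMap.fourierTransformCLM ℂ f with hgdef
      have hg_eq : ⇑g = FourierTransform.fourier ⇑f := by
        rw [hgdef, SchwartzMap.fourierTransformCLM_apply, SchwartzMap.fourier_coe]
      have hTf : ((SchwartzMap.integralCLM ℂ μ).comp (SchwartzMap.fourierTransformCLM ℂ)) f
          = ∫ t, Set.indicator S (fun t => g (φ t)) t := by
        rw [ContinuousLinearMap.comp_apply, SchwartzMap.integralCLM_apply, ← hgdef, hμdef,
          MeasureTheory.integral_map hφcont.measurable.aemeasurable
            g.continuous.aestronglyMeasurable,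
          ← MeasureTheory.integral_indicator hS]
      rw [hTf]
      set F : ℝ → (Fin r → ℝ) → ℂ := fun s t => Set.indicator S
        (fun t => Complex.exp (((2*Real.pi*s*c*(∑ j, t j) : ℝ) : ℂ)) * g (φ t)) t with hFdef
      have hgφint : Integrable (⇑g ∘ φ) ((volume : Measure (Fin r → ℝ)).restrict S) := by
        refine (MeasureTheory.integrable_map_measure g.continuous.aestronglyMeasurable
          hφcont.measurable.aemeasurable).mp ?_
        rw [← hμdef]; exact g.integrable
      have key : ∀ s : ℝ, 0 < s →
          (∫ X : EuclideanSpace ℝ (Fin d),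
            f X * (((-(2 * (Real.pi : ℂ)) * Complex.I) *
              (((∑ j, (α j : ℝ) * X j : ℝ) : ℂ) -
                Complex.I * (s : ℂ) * ((c : ℝ) : ℂ))) ^ r)⁻¹)
            = ∫ t, F s t := by
        intro s hs
        set B : ℝ := 2*Real.pi*s*c with hBdef
        have hBneg : B < 0 := by
          have := Real.pi_pos
          rw [hBdef]
          nlinarith [mul_pos hs (neg_pos.mpr hc)]
        set aa : EuclideanSpace ℝ (Fin d) → ℂ := fun X =>
          ((2*Real.pi*(L X) : ℝ) : ℂ) * Complex.I + ((B : ℝ) : ℂ) with haadef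
        have haare : ∀ X, (aa X).re = B := by
          intro X; rw [haadef]; simp
        have haaneg : ∀ X, (aa X).re < 0 := fun X => by rw [haare X]; exact hBneg
        have hzz : ∀ X : EuclideanSpace ℝ (Fin d),
            (-(2 * (Real.pi : ℂ)) * Complex.I) *
              (((∑ j, (α j : ℝ) * X j : ℝ) : ℂ) - Complex.I * (s : ℂ) * ((c : ℝ) : ℂ))
              = -(aa X) := by
          intro X
          rw [haadef, hBdef, hLdef]
          push_cast
          ring_nf
          rw [Complex.I_sq]
          ring
        have step1 : ∀ X : EuclideanSpace ℝ (Fin d),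
            ((((-(2 * (Real.pi : ℂ)) * Complex.I) *
              (((∑ j, (α j : ℝ) * X j : ℝ) : ℂ) -
                Complex.I * (s : ℂ) * ((c : ℝ) : ℂ))) ^ r)⁻¹ : ℂ)
              = ∫ t : Fin r → ℝ,
                  Set.indicator S (fun t => Complex.exp (aa X * ((∑ j, t j : ℝ) : ℂ))) t := by
          intro X
          rw [hzz X, hSdef, aux_pow_integral (haaneg X) r, ← inv_pow, inv_neg]
        have step2 : ∀ X : EuclideanSpace ℝ (Fin d),
            f X * ((((-(2 * (Real.pi : ℂ)) * Complex.I) *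
              (((∑ j, (α j : ℝ) * X j : ℝ) : ℂ) -
                Complex.I * (s : ℂ) * ((c : ℝ) : ℂ))) ^ r)⁻¹ : ℂ)
              = ∫ t : Fin r → ℝ,
                  f X * Set.indicator S (fun t => Complex.exp (aa X * ((∑ j, t j : ℝ) : ℂ))) t := by
          intro X
          rw [step1 X, MeasureTheory.integral_const_mul]
        have hcontaa : Continuous aa := by
          rw [haadef]
          exact ((Complex.continuous_ofReal.comp (continuous_const.mul hLcont)).mul
            continuous_const).add continuous_const
        have hswap : (∫ X : EuclideanSpace ℝ (Fin d), ∫ t : Fin r → ℝ,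
              f X * Set.indicator S (fun t => Complex.exp (aa X * ((∑ j, t j : ℝ) : ℂ))) t)
            = ∫ t : Fin r → ℝ, ∫ X : EuclideanSpace ℝ (Fin d),
              f X * Set.indicator S (fun t => Complex.exp (aa X * ((∑ j, t j : ℝ) : ℂ))) t := by
          apply MeasureTheory.integral_integral_swap
          have huncurry_eq : (Function.uncurry fun (X : EuclideanSpace ℝ (Fin d))
                (t : Fin r → ℝ) =>
                f X * Set.indicator S (fun t => Complex.exp (aa X * ((∑ j, t j : ℝ) : ℂ))) t)
              = Set.indicator ((Set.univ : Set (EuclideanSpace ℝ (Fin d))) ×ˢ S)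
                (fun p => f p.1 * Complex.exp (aa p.1 * ((∑ j, p.2 j : ℝ) : ℂ))) := by
            ext p
            by_cases hp : p.2 ∈ S
            · rw [show (Function.uncurry fun (X : EuclideanSpace ℝ (Fin d)) (t : Fin r → ℝ) =>
                  f X * Set.indicator S
                    (fun t => Complex.exp (aa X * ((∑ j, t j : ℝ) : ℂ))) t) p
                  = f p.1 * Set.indicator S
                    (fun t => Complex.exp (aa p.1 * ((∑ j, t j : ℝ) : ℂ))) p.2 from rfl,
                Set.indicator_of_mem hp, Set.indicator_of_mem (Set.mk_mem_prod (Set.mem_univ _) hp)]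
            · rw [show (Function.uncurry fun (X : EuclideanSpace ℝ (Fin d)) (t : Fin r → ℝ) =>
                  f X * Set.indicator S
                    (fun t => Complex.exp (aa X * ((∑ j, t j : ℝ) : ℂ))) t) p
                  = f p.1 * Set.indicator S
                    (fun t => Complex.exp (aa p.1 * ((∑ j, t j : ℝ) : ℂ))) p.2 from rfl,
                Set.indicator_of_notMem hp,
                Set.indicator_of_notMem (fun hmem => hp hmem.2), mul_zero]
          rw [huncurry_eq]
          refine MeasureTheory.Integrable.mono'
            (g := fun p : EuclideanSpace ℝ (Fin d) × (Fin r → ℝ) =>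
              ‖f p.1‖ * ∏ j, Set.indicator (Set.Ioi (0:ℝ))
                (fun u => Real.exp (B * u)) (p.2 j)) ?_ ?_ ?_
          · exact (f.integrable.norm).mul_prod
              (MeasureTheory.Integrable.fintype_prod (fun _ => aux_wexp_integrable hBneg))
          · refine AEStronglyMeasurable.indicator ?_ (MeasurableSet.univ.prod hS)
            refine Continuous.aestronglyMeasurable ?_
            refine ((f.continuous.comp continuous_fst).mul ?_)
            refine Complex.continuous_exp.comp ?_
            refine ((hcontaa.comp continuous_fst).mul ?_)
            exact Complex.continuous_ofReal.comp
              (continuous_finset_sum _ fun j _ => (continuous_apply j).comp continuous_snd)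
          · filter_upwards with p
            rw [norm_indicator_eq_indicator_norm]
            by_cases hp : p.2 ∈ S
            · rw [Set.indicator_of_mem (Set.mk_mem_prod (Set.mem_univ _) hp)]
              have hnorm : ‖f p.1 * Complex.exp (aa p.1 * ((∑ j, p.2 j : ℝ) : ℂ))‖
                  = ‖f p.1‖ * Real.exp (B * (∑ j, p.2 j)) := by
                rw [norm_mul]
                congr 1
                rw [Complex.norm_exp]
                congr 1
                rw [haadef]
                simp [Complex.add_re, Complex.mul_re]
              rw [hnorm]
              have hprod : (∏ j, Set.indicator (Set.Ioi (0:ℝ))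
                  (fun u => Real.exp (B * u)) (p.2 j))
                  = Real.exp (B * (∑ j, p.2 j)) := by
                rw [aux_prodK_real B p.2, Set.indicator_of_mem]
                rw [hSdef] at hp; exact hp
              rw [hprod]
            · rw [Set.indicator_of_notMem (fun hmem => hp hmem.2)]
              have hprod : (∏ j, Set.indicator (Set.Ioi (0:ℝ))
                  (fun u => Real.exp (B * u)) (p.2 j)) = 0 := by
                rw [aux_prodK_real B p.2, Set.indicator_of_notMem]
                rw [hSdef] at hp; exact hp
              rw [hprod, mul_zero]
        have step4 : ∀ t : Fin r → ℝ,
            (∫ X : EuclideanSpace ℝ (Fin d),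
              f X * Set.indicator S (fun t => Complex.exp (aa X * ((∑ j, t j : ℝ) : ℂ))) t)
              = F s t := by
          intro t
          by_cases ht : t ∈ S
          · have hmem : ∀ X : EuclideanSpace ℝ (Fin d),
                Set.indicator S (fun t => Complex.exp (aa X * ((∑ j, t j : ℝ) : ℂ))) t
                  = Complex.exp (aa X * ((∑ j, t j : ℝ) : ℂ)) :=
              fun X => Set.indicator_of_mem ht _
            simp only [hmem]
            set T : ℝ := ∑ j, t j with hTdef
            have hsplit : ∀ X : EuclideanSpace ℝ (Fin d),
                f X * Complex.exp (aa X * (T : ℂ))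
                  = (Complex.exp (((2*Real.pi*(T * L X) : ℝ) : ℂ) * Complex.I) * f X)
                      * Complex.exp (((B*T : ℝ) : ℂ)) := by
              intro X
              rw [haadef]
              simp only
              rw [add_mul, Complex.exp_add]
              push_cast
              ring
            simp only [hsplit]
            rw [MeasureTheory.integral_mul_const]
            have hfour : g (φ t) = ∫ X : EuclideanSpace ℝ (Fin d),
                Complex.exp (((2*Real.pi*(T * L X) : ℝ) : ℂ) * Complex.I) * f X := by
              rw [hg_eq, Real.fourier_eq']
              refine MeasureTheory.integral_congr_ae (Filter.Eventually.of_forall fun X => ?_)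
              simp only [smul_eq_mul]
              congr 2
              have hip : (inner ℝ X (φ t) : ℝ) = -(T * L X) := by
                rw [hφdef]
                simp only
                rw [← hTdef, real_inner_smul_right, hinner X]
                ring
              rw [hip]
              push_cast
              ring
            rw [← hfour, hFdef]
            simp only
            rw [Set.indicator_of_mem ht, mul_comm]
          · have hmem : ∀ X : EuclideanSpace ℝ (Fin d),
                Set.indicator S (fun t => Complex.exp (aa X * ((∑ j, t j : ℝ) : ℂ))) t = 0 :=
              fun X => Set.indicator_of_notMem ht _
            simp only [hmem, mul_zero, MeasureTheory.integral_zero]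
            exact (Set.indicator_of_notMem ht _).symm
        calc (∫ X : EuclideanSpace ℝ (Fin d),
              f X * (((-(2 * (Real.pi : ℂ)) * Complex.I) *
                (((∑ j, (α j : ℝ) * X j : ℝ) : ℂ) -
                  Complex.I * (s : ℂ) * ((c : ℝ) : ℂ))) ^ r)⁻¹)
            = ∫ X : EuclideanSpace ℝ (Fin d), ∫ t : Fin r → ℝ,
                f X * Set.indicator S
                  (fun t => Complex.exp (aa X * ((∑ j, t j : ℝ) : ℂ))) t := by
              exact MeasureTheory.integral_congr_ae
                (Filter.Eventually.of_forall fun X => step2 X)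
          _ = ∫ t : Fin r → ℝ, ∫ X : EuclideanSpace ℝ (Fin d),
                f X * Set.indicator S
                  (fun t => Complex.exp (aa X * ((∑ j, t j : ℝ) : ℂ))) t := hswap
          _ = ∫ t : Fin r → ℝ, F s t :=
              MeasureTheory.integral_congr_ae (Filter.Eventually.of_forall fun t => step4 t)
      have conv : Filter.Tendsto (fun s : ℝ => ∫ t : Fin r → ℝ, F s t)
          (nhdsWithin 0 (Set.Ioi 0))
          (nhds (∫ t : Fin r → ℝ, Set.indicator S (fun t => g (φ t)) t)) := by
        apply MeasureTheory.tendsto_integral_filter_of_dominated_convergence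
          (bound := fun t => Set.indicator S (fun t => ‖g (φ t)‖) t)
        · filter_upwards with s
          rw [hFdef]
          refine AEStronglyMeasurable.indicator ?_ hS
          refine Continuous.aestronglyMeasurable ?_
          refine Continuous.mul ?_ (g.continuous.comp hφcont)
          refine Complex.continuous_exp.comp ?_
          exact Complex.continuous_ofReal.comp
            (continuous_const.mul (continuous_finset_sum _ fun j _ => continuous_apply j))
        · filter_upwards [self_mem_nhdsWithin] with s hs
          filter_upwards with t
          rw [hFdef, norm_indicator_eq_indicator_norm]
          by_cases ht : t ∈ S
          · rw [Set.indicator_of_mem ht, Set.indicator_of_mem ht, norm_mul]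
            have hexp : ‖Complex.exp (((2*Real.pi*s*c*(∑ j, t j) : ℝ) : ℂ))‖ ≤ 1 := by
              rw [Complex.norm_exp, Complex.ofReal_re]
              rw [Real.exp_le_one_iff]
              have hT0 : 0 ≤ ∑ j, t j := Finset.sum_nonneg fun j _ => (ht j).le
              have := Real.pi_pos
              have hs' : (0:ℝ) < s := hs
              nlinarith [mul_nonneg (mul_pos hs' (neg_pos.mpr hc)).le hT0]
            calc ‖Complex.exp (((2*Real.pi*s*c*(∑ j, t j) : ℝ) : ℂ))‖ * ‖g (φ t)‖
                ≤ 1 * ‖g (φ t)‖ := by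
                  exact mul_le_mul_of_nonneg_right hexp (norm_nonneg _)
              _ = ‖g (φ t)‖ := one_mul _
          · rw [Set.indicator_of_notMem ht, Set.indicator_of_notMem ht]
        · rw [MeasureTheory.integrable_indicator_iff hS]
          exact hgφint.norm
        · filter_upwards with t
          rw [hFdef]
          by_cases ht : t ∈ S
          · simp only [Set.indicator_of_mem ht]
            have h1 : Filter.Tendsto (fun s : ℝ =>
                Complex.exp (((2*Real.pi*s*c*(∑ j, t j) : ℝ) : ℂ))) (nhds 0) (nhds 1) := by
              have hcont2 : Continuous (fun s : ℝ =>
                  Complex.exp (((2*Real.pi*s*c*(∑ j, t j) : ℝ) : ℂ))) := by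
                refine Complex.continuous_exp.comp ?_
                refine Complex.continuous_ofReal.comp ?_
                continuity
              have := hcont2.tendsto 0
              simpa using this
            have h2 := (h1.mono_left (nhdsWithin_le_nhds : nhdsWithin (0:ℝ) (Set.Ioi 0) ≤ nhds 0)).mul_const (g (φ t))
            rw [one_mul] at h2
            exact h2
          · simp only [Set.indicator_of_notMem ht]
            exact tendsto_const_nhds
      refine Filter.Tendsto.congr' ?_ conv
      filter_upwards [self_mem_nhdsWithin] with s hs
      exact (key s hs).symm
    · -- Fourier side
      intro f
      have h1 : SchwartzMap.fourierTransformCLM ℂ ((FourierTransform.fourierCLE ℂ (SchwartzMap (EuclideanSpace ℝ (Fin d)) ℂ)).symm f)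
          = f := by
        have h := (FourierTransform.fourierCLE ℂ (SchwartzMap (EuclideanSpace ℝ (Fin d)) ℂ)).apply_symm_apply f
        ext x
        have h2 : (SchwartzMap.fourierTransformCLM ℂ
            ((FourierTransform.fourierCLE ℂ (SchwartzMap (EuclideanSpace ℝ (Fin d)) ℂ)).symm f)) x
            = (FourierTransform.fourierCLE ℂ (SchwartzMap (EuclideanSpace ℝ (Fin d)) ℂ)
              ((FourierTransform.fourierCLE ℂ (SchwartzMap (EuclideanSpace ℝ (Fin d)) ℂ)).symm f)) x := by
          rw [SchwartzMap.fourierTransformCLM_apply, FourierTransform.fourierCLE_apply]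
        rw [h2, h]
      rw [ContinuousLinearMap.comp_apply, h1, SchwartzMap.integralCLM_apply]
      rw [hμdef, MeasureTheory.integral_map hφcont.measurable.aemeasurable
        f.continuous.aestronglyMeasurable]
      apply MeasureTheory.setIntegral_congr_fun hS
      intro t _
      rw [hφdef]
      simp only
      rw [Finset.sum_smul]
end
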